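/- arXiv:1512.01229 — 2 statements merged into one kernel-verified Lean document; each statement's English description precedes it below -/
import Mathlib

section
/- Let X be an exchangeable sequence of {0,1}-valued random variables and define Ω_n(z) := Σ_{h=0}^{n} ω_h^(n) z^h over ℂ. Then the entire function Ω(1+z) := Σ_{h=0}^{∞} ω_h^(h) z^h / h! is well defined (the series converges for all z ∈ ℂ), and the functions z ↦ Ω_n(1 + z/n) converge to z ↦ Ω(1+z) as n → ∞, uniformly on every compact subset of ℂ. -/
open MeasureTheory ProbabilityTheory Filter

def Exchangeable {Ω : Type*} [MeasurableSpace Ω] (P : Measure Ω) (X : ℕ → Ω → ℕ) : Prop :=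
  ∀ (n : ℕ) (σ : Equiv.Perm (Fin n)),
    P.map (fun ω => fun i : Fin n => X (σ i) ω) =
      P.map (fun ω => fun i : Fin n => X i ω)

/-- `succProb P X n h = ω_h^(n)`, the probability of exactly `h` successes in the
first `n` trials. -/
noncomputable def succProb {Ω : Type*} [MeasurableSpace Ω] (P : Measure Ω)
    (X : ℕ → Ω → ℕ) (n h : ℕ) : ℝ :=
  (P {ω | ∑ i ∈ Finset.range n, X i ω = h}).toReal

/-- `allOnes P X h = ω_h^(h) = P(X_0 = ⋯ = X_{h-1} = 1)`, the probability that the first `h`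
trials are all successes (with `allOnes P X 0 = 1` since `P` is a probability measure). -/
noncomputable def allOnes {Ω : Type*} [MeasurableSpace Ω] (P : Measure Ω)
    (X : ℕ → Ω → ℕ) (h : ℕ) : ℝ :=
  (P {ω | ∀ i < h, X i ω = 1}).toReal

/-- The generating polynomial `Ω_n(z) = ∑_{h=0}^n ω_h^(n) z^h`, as a function on `ℂ`. -/
noncomputable def genPoly {Ω : Type*} [MeasurableSpace Ω] (P : Measure Ω)
    (X : ℕ → Ω → ℕ) (n : ℕ) : ℂ → ℂ :=
  fun z => ∑ h ∈ Finset.range (n + 1), (succProb P X n h : ℂ) * z ^ h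

/-!
Counting pairs (`k`-subset of the first `n` trials, outcome) in two ways: on the event
`S_n = h` there are `C(h, k)` all-success `k`-subsets, while by exchangeability each fixed
`k`-subset is all-success with probability `ω_k^(k)`. Hence
`∑_h C(h, k) ω_h^(n) = E[C(S_n, k)] = C(n, k) ω_k^(k)`, and expanding `(1 + z/n)^h` binomially gives
`Ω_n(1 + z/n) = ∑_k ω_k^(k) C(n, k) n^(-k) z^k`. The coefficients `C(n, k) n^(-k)` are bounded by
`1/k!` and tend to `1/k!`, so Tannery's theorem gives uniform convergence on every disc.
-/

open Finset Topology Function Metric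
open scoped ENNReal Nat

theorem Finset.sum_mul_one_add_pow {R : Type*} [CommSemiring R] (p : ℕ → R) (w : R) (N : ℕ) :
    ∑ h ∈ range N, p h * (1 + w) ^ h =
      ∑ k ∈ range N, (∑ h ∈ range N, (h.choose k : R) * p h) * w ^ k := by
  have expand : ∀ h ∈ range N, (1 + w) ^ h = ∑ k ∈ range N, (h.choose k : R) * w ^ k := by
    intro h hh
    rw [add_comm, add_pow]
    refine sum_subset (fun k hk => ?_) (fun k _ hk => ?_) |>.trans (sum_congr rfl fun k _ => ?_)
    · simp only [mem_range] at hh hk ⊢; omega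
    · rw [Nat.choose_eq_zero_of_lt (by simpa using hk)]; simp
    · simp [mul_comm]
  rw [sum_congr rfl fun h hh => by rw [expand h hh, mul_sum]]
  simp_rw [sum_mul]
  rw [sum_comm]
  exact sum_congr rfl fun k _ => sum_congr rfl fun h _ => by ring

theorem Finset.choose_sum_eq_card_filter_powersetCard {ι : Type*} (s : Finset ι) (g : ι → ℕ)
    (hg : ∀ i ∈ s, g i ≤ 1) (k : ℕ) :
    (∑ i ∈ s, g i).choose k = #{A ∈ s.powersetCard k | ∀ i ∈ A, g i = 1} := by
  classical
  have hsum : ∑ i ∈ s, g i = #{i ∈ s | g i = 1} := by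
    rw [card_filter]
    refine sum_congr rfl fun i hi => ?_
    rcases Nat.le_one_iff_eq_zero_or_eq_one.mp (hg i hi) with h | h <;> simp [h]
  rw [hsum, ← card_powersetCard]
  congr 1
  ext A
  simp only [mem_powersetCard, mem_filter, subset_iff]
  grind

-- Also valid for `n = 0`, where `(0 : ℝ)⁻¹ = 0`.
theorem Nat.choose_mul_inv_pow_le (n k : ℕ) :
    (n.choose k : ℝ) * (n : ℝ)⁻¹ ^ k ≤ (k ! : ℝ)⁻¹ :=
  calc (n.choose k : ℝ) * (n : ℝ)⁻¹ ^ k ≤ (n : ℝ) ^ k / k ! * (n : ℝ)⁻¹ ^ k := by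
        gcongr; exact Nat.choose_le_pow_div k n
    _ = ((n : ℝ) * (n : ℝ)⁻¹) ^ k * (k ! : ℝ)⁻¹ := by ring
    _ ≤ (k ! : ℝ)⁻¹ :=
        mul_le_of_le_one_left (by positivity) (pow_le_one₀ (by positivity) mul_inv_le_one)

theorem Nat.tendsto_choose_mul_inv_pow (k : ℕ) :
    Tendsto (fun n : ℕ => (n.choose k : ℝ) * (n : ℝ)⁻¹ ^ k) atTop (𝓝 (k ! : ℝ)⁻¹) := by
  have hmul : Tendsto (fun n : ℕ => (n : ℝ) * (n : ℝ)⁻¹) atTop (𝓝 1) :=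
    tendsto_const_nhds.congr' <| (eventually_ne_atTop 0).mono fun n hn => by field_simp
  simpa using tendsto_choose_mul_pow_atTop k hmul

section PowerSeries

variable {𝕜 : Type*} [NormedField 𝕜] [CompleteSpace 𝕜]

theorem summable_mul_pow_of_norm_le {c : ℕ → 𝕜} {b : ℕ → ℝ} {R : ℝ}
    (hb : Summable fun k => b k * R ^ k) (hcb : ∀ k, ‖c k‖ ≤ b k) {z : 𝕜} (hz : ‖z‖ ≤ R) :
    Summable fun k => c k * z ^ k :=
  hb.of_norm_bounded fun k => by
    rw [norm_mul, norm_pow]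
    exact mul_le_mul (hcb k) (pow_le_pow_left₀ (norm_nonneg z) hz k) (by positivity)
      ((norm_nonneg _).trans (hcb k))

theorem tendstoUniformlyOn_tsum_mul_pow {ι : Type*} {l : Filter ι} {c : ι → ℕ → 𝕜}
    {d : ℕ → 𝕜} {b : ℕ → ℝ} {R : ℝ} (hb : Summable fun k => b k * R ^ k)
    (hcd : ∀ k, Tendsto (c · k) l (𝓝 (d k))) (hcb : ∀ᶠ i in l, ∀ k, ‖c i k‖ ≤ b k) :
    TendstoUniformlyOn (fun i z => ∑' k, c i k * z ^ k) (fun z => ∑' k, d k * z ^ k) l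
      (closedBall 0 R) := by
  rcases l.eq_or_neBot with rfl | _
  · exact fun u _ => by simp
  rcases lt_or_ge R 0 with hR | hR
  · simp [closedBall_eq_empty.mpr hR, tendstoUniformlyOn_empty]
  have hdb : ∀ k, ‖d k‖ ≤ b k := fun k => le_of_tendsto (hcd k).norm (hcb.mono fun i hi => hi k)
  have hdiff : ∀ᶠ i in l, ∀ k, ‖c i k - d k‖ * R ^ k ≤ 2 * (b k * R ^ k) :=
    hcb.mono fun i hi k => by
      rw [← mul_assoc, two_mul]
      gcongr
      exact (norm_sub_le _ _).trans (add_le_add (hi k) (hdb k))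
  have herr : Tendsto (fun i => ∑' k, ‖c i k - d k‖ * R ^ k) l (𝓝 0) := by
    rw [← tsum_zero]
    refine tendsto_tsum_of_dominated_convergence (hb.mul_left 2)
      (fun k => by simpa using ((hcd k).sub_const (d k)).norm.mul_const (R ^ k))
      (hdiff.mono fun i hi k => by rw [Real.norm_of_nonneg (by positivity)]; exact hi k)
  rw [Metric.tendstoUniformlyOn_iff]
  intro ε hε
  filter_upwards [herr.eventually (gt_mem_nhds hε), hcb, hdiff] with i hi hib hid z hz
  rw [mem_closedBall, dist_zero_right] at hz
  have hsum_err : Summable fun k => ‖c i k - d k‖ * R ^ k :=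
    (hb.mul_left 2).of_nonneg_of_le (fun k => by positivity) hid
  calc dist (∑' k, d k * z ^ k) (∑' k, c i k * z ^ k)
      = ‖∑' k, (c i k - d k) * z ^ k‖ := by
        rw [dist_comm, dist_eq_norm, ← Summable.tsum_sub (summable_mul_pow_of_norm_le hb hib hz)
          (summable_mul_pow_of_norm_le hb hdb hz)]
        simp_rw [sub_mul]
    _ ≤ ∑' k, ‖c i k - d k‖ * R ^ k := tsum_of_norm_bounded hsum_err.hasSum fun k => by
        rw [norm_mul, norm_pow]; gcongr
    _ < ε := hi

end PowerSeries

section Probability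

variable {Ω : Type*} [MeasurableSpace Ω] {P : Measure Ω}

theorem lintegral_comp_eq_sum_measure_preimage {α : Type*} [MeasurableSpace α] [Countable α]
    [MeasurableSingletonClass α] {f : Ω → α} (hf : Measurable f) {s : Finset α}
    (hfs : ∀ ω, f ω ∈ s) (g : α → ℝ≥0∞) :
    ∫⁻ ω, g (f ω) ∂P = ∑ a ∈ s, g a * P (f ⁻¹' {a}) := by
  rw [← lintegral_map (measurable_of_countable g) hf, lintegral_countable', tsum_eq_sum (s := s)]
  · simp_rw [Measure.map_apply hf (measurableSet_singleton _)]
  · intro a ha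
    rw [Measure.map_apply hf (measurableSet_singleton _),
      Set.preimage_singleton_eq_empty.2 fun ⟨ω, hω⟩ => ha (hω ▸ hfs ω), measure_empty, mul_zero]

theorem lintegral_choose_sum_eq_sum_measure {ι : Type*} {X : ι → Ω → ℕ}
    (hX01 : ∀ i ω, X i ω ≤ 1) (hXmeas : ∀ i, Measurable (X i)) (s : Finset ι) (k : ℕ) :
    ∫⁻ ω, ((∑ i ∈ s, X i ω).choose k : ℝ≥0∞) ∂P =
      ∑ A ∈ s.powersetCard k, P {ω | ∀ i ∈ A, X i ω = 1} := by
  classical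
  have hmeas : ∀ A : Finset ι, MeasurableSet {ω | ∀ i ∈ A, X i ω = 1} := fun A => by
    simp only [Set.ofPred_forall]
    exact Finset.measurableSet_biInter A fun i _ => hXmeas i (measurableSet_singleton 1)
  simp_rw [choose_sum_eq_card_filter_powersetCard s _ (fun i _ => hX01 i _), card_filter,
    Nat.cast_sum, Nat.cast_ite, Nat.cast_one, Nat.cast_zero]
  rw [lintegral_finsetSum' _ fun A _ => (Measurable.ite (hmeas A) measurable_const
    measurable_const).aemeasurable]
  refine sum_congr rfl fun A _ => ?_
  simp_rw [← lintegral_indicator_one (hmeas A), Set.indicator_apply, Set.mem_ofPred_eq,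
    Pi.one_apply]

end Probability

namespace Exchangeable

variable {Ω : Type*} [MeasurableSpace Ω] {P : Measure Ω} {X : ℕ → Ω → ℕ}

theorem map_comp_injective (hexch : Exchangeable P X) (hXmeas : ∀ i, Measurable (X i)) {k : ℕ}
    {f : Fin k → ℕ} (hf : Injective f) :
    P.map (fun ω i => X (f i) ω) = P.map (fun ω (i : Fin k) => X i ω) := by
  set n := univ.sup f + k + 1
  have hfn : ∀ i, f i < n := fun i => by have := le_sup (f := f) (mem_univ i); omega
  have hkn : k ≤ n := by omega
  obtain ⟨σ, hσ⟩ := Equiv.Perm.exists_extending_pair (Fin.castLE hkn) (fun i => ⟨f i, hfn i⟩)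
    (Fin.castLE_injective hkn) fun i j h => hf (congrArg Fin.val h)
  have hproj : Measurable fun (v : Fin n → ℕ) (i : Fin k) => v (Fin.castLE hkn i) := by fun_prop
  calc P.map (fun ω i => X (f i) ω)
      = (P.map fun ω (j : Fin n) => X (σ j) ω).map fun v i => v (Fin.castLE hkn i) := by
        rw [Measure.map_map hproj (measurable_pi_lambda _ fun j => hXmeas _)]
        simp only [comp_def, hσ]
    _ = (P.map fun ω (j : Fin n) => X j ω).map fun v i => v (Fin.castLE hkn i) := by
        rw [hexch n σ]
    _ = P.map (fun ω (i : Fin k) => X i ω) := by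
        rw [Measure.map_map hproj (measurable_pi_lambda _ fun j => hXmeas _)]
        rfl

theorem measure_forall_mem_eq_one (hexch : Exchangeable P X) (hXmeas : ∀ i, Measurable (X i))
    (A : Finset ℕ) : P {ω | ∀ i ∈ A, X i ω = 1} = P {ω | ∀ i < #A, X i ω = 1} := by
  set f : Fin #A → ℕ := fun i => A.equivFin.symm i
  have hf : Injective f := Subtype.val_injective.comp A.equivFin.symm.injective
  have hA : {ω | ∀ i ∈ A, X i ω = 1} = (fun ω i => X (f i) ω) ⁻¹' {1} := by
    ext ω
    simp [funext_iff, f, A.equivFin.symm.forall_congr_left]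
  have hrange : {ω | ∀ i < #A, X i ω = 1} = (fun ω (i : Fin #A) => X i ω) ⁻¹' {1} := by
    ext ω
    simp [funext_iff, Fin.forall_iff]
  rw [hA, hrange, ← Measure.map_apply (measurable_pi_lambda _ fun i => hXmeas _)
    (measurableSet_singleton _), ← Measure.map_apply (measurable_pi_lambda _ fun i => hXmeas _)
    (measurableSet_singleton _), hexch.map_comp_injective hXmeas hf]

theorem lintegral_choose_sum_range (hexch : Exchangeable P X) (hX01 : ∀ i ω, X i ω ≤ 1)
    (hXmeas : ∀ i, Measurable (X i)) (n k : ℕ) :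
    ∫⁻ ω, ((∑ i ∈ range n, X i ω).choose k : ℝ≥0∞) ∂P =
      n.choose k * P {ω | ∀ i < k, X i ω = 1} := by
  rw [lintegral_choose_sum_eq_sum_measure hX01 hXmeas, sum_congr rfl fun A hA => by
    rw [hexch.measure_forall_mem_eq_one hXmeas, (mem_powersetCard.mp hA).2]]
  rw [sum_const, card_powersetCard, card_range, nsmul_eq_mul]

theorem sum_choose_mul_succProb [IsFiniteMeasure P] (hexch : Exchangeable P X)
    (hX01 : ∀ i ω, X i ω ≤ 1) (hXmeas : ∀ i, Measurable (X i)) (n k : ℕ) :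
    ∑ h ∈ range (n + 1), (h.choose k : ℝ) * succProb P X n h = n.choose k * allOnes P X k := by
  have hS : Measurable fun ω => ∑ i ∈ range n, X i ω := by fun_prop
  have hSn : ∀ ω, ∑ i ∈ range n, X i ω ∈ range (n + 1) := fun ω => by
    simpa [Nat.lt_succ_iff] using sum_le_card_nsmul (range n) _ 1 fun i _ => hX01 i ω
  have h := congrArg ENNReal.toReal (hexch.lintegral_choose_sum_range hX01 hXmeas n k)
  rw [lintegral_comp_eq_sum_measure_preimage (g := fun h => (h.choose k : ℝ≥0∞)) hS hSn,
    ENNReal.toReal_sum fun h _ => ENNReal.mul_ne_top (ENNReal.natCast_ne_top _)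
      (measure_ne_top P _)] at h
  simp only [ENNReal.toReal_mul, ENNReal.toReal_natCast] at h
  exact h

theorem genPoly_one_add_div [IsFiniteMeasure P] (hexch : Exchangeable P X)
    (hX01 : ∀ i ω, X i ω ≤ 1) (hXmeas : ∀ i, Measurable (X i)) (n : ℕ) (z : ℂ) :
    genPoly P X n (1 + z / n) =
      ∑' k, ((allOnes P X k * (n.choose k * (n : ℝ)⁻¹ ^ k) : ℝ) : ℂ) * z ^ k := by
  rw [genPoly, sum_mul_one_add_pow, tsum_eq_sum (s := range (n + 1))]
  · refine sum_congr rfl fun k _ => ?_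
    have h := congrArg ((↑) : ℝ → ℂ) (hexch.sum_choose_mul_succProb hX01 hXmeas n k)
    push_cast at h ⊢
    rw [h]
    ring
  · intro k hk
    rw [Nat.choose_eq_zero_of_lt (by simpa [Nat.lt_succ_iff] using hk)]
    simp

end Exchangeable

/-- the entire function `Ω(1+z) = ∑_{h=0}^∞ ω_h^(h) z^h / h!` is well defined
(the series converges for all `z ∈ ℂ`), and `z ↦ Ω_n(1 + z/n)` converges to `z ↦ Ω(1+z)`
uniformly on every compact subset of `ℂ`. -/
theorem deFinetti_stmt4 {Ω : Type*} [MeasurableSpace Ω] (P : Measure Ω)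
    [IsProbabilityMeasure P] (X : ℕ → Ω → ℕ)
    (hX01 : ∀ k ω, X k ω ≤ 1) (hXmeas : ∀ k, Measurable (X k))
    (hexch : Exchangeable P X) :
    (∀ z : ℂ, Summable fun h : ℕ => (allOnes P X h : ℂ) * z ^ h / (h.factorial : ℂ)) ∧
      ∀ K : Set ℂ, IsCompact K →
        TendstoUniformlyOn (fun (n : ℕ) (z : ℂ) => genPoly P X n (1 + z / n))
          (fun z => ∑' h : ℕ, (allOnes P X h : ℂ) * z ^ h / (h.factorial : ℂ))
          atTop K := by
  have hterm : ∀ h (z : ℂ), (allOnes P X h : ℂ) * z ^ h / h ! =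
      ((allOnes P X h * (h ! : ℝ)⁻¹ : ℝ) : ℂ) * z ^ h := fun h z => by push_cast; ring
  have hb : ∀ R, Summable fun k => (k ! : ℝ)⁻¹ * R ^ k := fun R => by
    simpa only [div_eq_inv_mul] using Real.summable_pow_div_factorial R
  have hnorm : ∀ {r : ℝ} (k : ℕ), 0 ≤ r → r ≤ (k ! : ℝ)⁻¹ →
      ‖((allOnes P X k * r : ℝ) : ℂ)‖ ≤ (k ! : ℝ)⁻¹ := fun k hr0 hr => by
    have h0 : 0 ≤ allOnes P X k := ENNReal.toReal_nonneg
    rw [Complex.norm_real, Real.norm_of_nonneg (by positivity)]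
    exact (mul_le_of_le_one_left hr0 measureReal_le_one).trans hr
  simp_rw [hterm, hexch.genPoly_one_add_div hX01 hXmeas]
  refine ⟨fun z => summable_mul_pow_of_norm_le (hb ‖z‖) (fun k => hnorm k (by positivity) le_rfl)
    le_rfl, fun K hK => ?_⟩
  obtain ⟨R, hKR⟩ := hK.isBounded.subset_closedBall 0
  refine (tendstoUniformlyOn_tsum_mul_pow (hb R) (fun k => ?_) (.of_forall fun n k => ?_)).mono hKR
  · exact Complex.continuous_ofReal.continuousAt.tendsto.comp
      ((Nat.tendsto_choose_mul_inv_pow k).const_mul _)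
  · exact hnorm k (by positivity) (Nat.choose_mul_inv_pow_le n k)
end

section
/- Let X be an exchangeable sequence of {0,1}-valued random variables, let r, s ≥ 0 with P(X_0 + ⋯ + X_{r+s−1} = r) > 0. Then for every n ≥ 1 and 0 ≤ h ≤ n, the conditional probability that h of the next n trials are successes given that r of the first r+s trials were successes equals P(X_{r+s} + ⋯ + X_{r+s+n−1} = h | X_0 + ⋯ + X_{r+s−1} = r) = [C(h+r, r) · C(n−h+s, s) / C(n+r+s, n)] · ω_{h+r}^(n+r+s) / ω_r^(r+s). -/
open MeasureTheory ProbabilityTheory Filter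

/-!
By exchangeability, the probability that the first `m` trials realize a prescribed 0/1 pattern
depends only on the number of ones in it. With `N = n + r + s` and `p` the probability of one
pattern of length `N` with `h + r` ones, counting patterns gives
`P(A ∩ B) = C(r+s, r) C(n, h) p` and `ω_{h+r}^(N) = C(N, h+r) p`, where `A` and `B` are the
events of `r` successes in the first `r + s` trials and `h` in the next `n`.
Dividing by `P(A)`, the formula is the identity
`C(r+s, r) C(n, h) C(N, n) = C(h+r, r) C(n-h+s, s) C(N, h+r)`.
-/

open Finset

theorem card_filter_card_filter_eq_choose_mul_choose {α : Type*} [Fintype α] [DecidableEq α]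
    (p : α → Prop) [DecidablePred p] (a b : ℕ) :
    #{S : Finset α | #{i ∈ S | p i} = a ∧ #{i ∈ S | ¬p i} = b} =
      (#{i | p i}).choose a * (#{i | ¬p i}).choose b := by
  rw [← card_powersetCard, ← card_powersetCard, ← card_product]
  have filter_union_of_forall (A B : Finset α) (hA : ∀ i ∈ A, p i) (hB : ∀ i ∈ B, ¬p i) :
      {i ∈ A ∪ B | p i} = A ∧ {i ∈ A ∪ B | ¬p i} = B := by
    constructor <;> ext i <;> by_cases hi : p i <;> grind
  refine card_nbij' (fun S => ({i ∈ S | p i}, {i ∈ S | ¬p i})) (fun T => T.1 ∪ T.2)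
    ?_ ?_ (fun S _ => filter_union_filter_not_eq p S) ?_
  · intro S hS
    simp_all [mem_powersetCard, filter_subset_filter]
  · rintro ⟨A, B⟩ hAB
    simp only [coe_product, Set.mem_prod, mem_coe, mem_powersetCard, subset_iff, mem_filter,
      mem_univ, true_and] at hAB
    simp [filter_union_of_forall A B hAB.1.1 hAB.2.1, hAB.1.2, hAB.2.2]
  · rintro ⟨A, B⟩ hAB
    simp only [coe_product, Set.mem_prod, mem_coe, mem_powersetCard, subset_iff, mem_filter,
      mem_univ, true_and] at hAB
    simp [filter_union_of_forall A B hAB.1.1 hAB.2.1]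

/- Both sides are the multinomial coefficient `(r + s + h + d)! / (r! s! h! d!)`. -/
open Nat in
theorem choose_mul_choose_mul_choose_eq (r s h d : ℕ) :
    (r + s).choose r * (h + d).choose h * (r + s + (h + d)).choose (h + d) =
      (h + r).choose r * (d + s).choose s * (r + s + (h + d)).choose (h + r) := by
  rw [← choose_symm_add (a := r + s), ← choose_symm_add (a := h) (b := r),
    ← choose_symm_add (a := d) (b := s)]
  nth_rw 2 [show r + s + (h + d) = h + r + (d + s) by ring]
  qify
  simp only [cast_add_choose]
  rw [show h + r + (d + s) = r + s + (h + d) by ring]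
  field_simp

section

variable {Ω : Type*} {X : ℕ → Ω → ℕ}

def successes (X : ℕ → Ω → ℕ) (m : ℕ) (ω : Ω) : Finset (Fin m) := {i | X i ω = 1}

theorem sum_filter_range_eq_card_filter_successes (hX01 : ∀ k ω, X k ω ≤ 1) (m : ℕ) (ω : Ω)
    (p : ℕ → Prop) [DecidablePred p] :
    ∑ i ∈ range m with p i, X i ω = #{i ∈ successes X m ω | p i.val} := by
  have hX : ∀ i, (if p i then X i ω else 0) = if X i ω = 1 ∧ p i then 1 else 0 := by
    intro i
    rcases Nat.le_one_iff_eq_zero_or_eq_one.mp (hX01 i ω) with h | h <;> simp [h]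
  rw [successes, filter_filter, card_filter, sum_filter, ← Fin.sum_univ_eq_sum_range]
  simp only [hX]

theorem sum_range_eq_card_successes (hX01 : ∀ k ω, X k ω ≤ 1) (m : ℕ) (ω : Ω) :
    ∑ i ∈ range m, X i ω = #(successes X m ω) := by
  simpa using sum_filter_range_eq_card_filter_successes hX01 m ω fun _ => True

variable [MeasurableSpace Ω] {P : Measure Ω}

theorem measurableSet_successes_eq (hXmeas : ∀ k, Measurable (X k)) {m : ℕ}
    (S : Finset (Fin m)) : MeasurableSet {ω | successes X m ω = S} :=
  measurable_pi_lambda _ (fun i : Fin m => hXmeas i)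
    (Set.to_countable {v : Fin m → ℕ | ({i | v i = 1} : Finset (Fin m)) = S}).measurableSet

theorem measure_successes_mem (hXmeas : ∀ k, Measurable (X k)) {m : ℕ}
    (𝒮 : Finset (Finset (Fin m))) :
    P {ω | successes X m ω ∈ 𝒮} = ∑ S ∈ 𝒮, P {ω | successes X m ω = S} :=
  (sum_measure_preimage_singleton 𝒮 fun S _ => measurableSet_successes_eq hXmeas S).symm

namespace Exchangeable

theorem measure_preimage_perm (hexch : Exchangeable P X) (hXmeas : ∀ k, Measurable (X k))
    {m : ℕ} (σ : Equiv.Perm (Fin m)) (E : Set (Fin m → ℕ)) :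
    P ((fun ω (i : Fin m) => X (σ i) ω) ⁻¹' E) = P ((fun ω (i : Fin m) => X i ω) ⁻¹' E) := by
  have hE : MeasurableSet E := (Set.to_countable E).measurableSet
  have := congrArg (· E) (hexch m σ)
  simpa only [Measure.map_apply (measurable_pi_lambda _ fun i => hXmeas _) hE] using this

theorem measure_successes_eq_of_card_eq (hexch : Exchangeable P X)
    (hXmeas : ∀ k, Measurable (X k)) {m : ℕ} {S T : Finset (Fin m)} (hST : #S = #T) :
    P {ω | successes X m ω = S} = P {ω | successes X m ω = T} := by
  obtain ⟨σ, rfl⟩ := Equiv.Perm.exists_map_finset_eq T S hST.symm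
  have hpre : {ω | successes X m ω = T.map σ.toEmbedding} =
      (fun ω (i : Fin m) => X (σ i) ω) ⁻¹' {v | ({i | v i = 1} : Finset (Fin m)) = T} := by
    ext ω
    simp only [successes, Set.mem_ofPred_eq, Set.mem_preimage, Finset.ext_iff, mem_filter,
      mem_univ, true_and, mem_map_equiv]
    rw [← σ.forall_congr_right]
    simp
  rw [hpre]
  exact hexch.measure_preimage_perm hXmeas σ _

theorem measure_successes_mem_of_card_eq (hexch : Exchangeable P X)
    (hXmeas : ∀ k, Measurable (X k)) {m k : ℕ} {𝒮 : Finset (Finset (Fin m))}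
    (h𝒮 : ∀ S ∈ 𝒮, #S = k) {T : Finset (Fin m)} (hT : #T = k) :
    P {ω | successes X m ω ∈ 𝒮} = #𝒮 * P {ω | successes X m ω = T} := by
  rw [measure_successes_mem hXmeas, ← nsmul_eq_mul, ← sum_const]
  exact sum_congr rfl fun S hS =>
    hexch.measure_successes_eq_of_card_eq hXmeas ((h𝒮 S hS).trans hT.symm)

theorem measure_sum_range_eq (hexch : Exchangeable P X) (hXmeas : ∀ k, Measurable (X k))
    (hX01 : ∀ k ω, X k ω ≤ 1) {m k : ℕ} {T : Finset (Fin m)} (hT : #T = k) :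
    P {ω | ∑ i ∈ range m, X i ω = k} = m.choose k * P {ω | successes X m ω = T} := by
  have hevent : {ω | ∑ i ∈ range m, X i ω = k} =
      {ω | successes X m ω ∈ powersetCard k univ} := by
    ext ω
    simp [sum_range_eq_card_successes hX01, mem_powersetCard]
  rw [hevent, hexch.measure_successes_mem_of_card_eq hXmeas
    (fun S hS => (mem_powersetCard.1 hS).2) hT, card_powersetCard, card_univ, Fintype.card_fin]

theorem measure_sum_range_inter_sum_range_add_eq (hexch : Exchangeable P X)
    (hXmeas : ∀ k, Measurable (X k)) (hX01 : ∀ k ω, X k ω ≤ 1) {a b r h : ℕ}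
    {T : Finset (Fin (a + b))} (hT : #T = r + h) :
    P ({ω | ∑ i ∈ range a, X i ω = r} ∩ {ω | ∑ i ∈ range b, X (a + i) ω = h}) =
      a.choose r * b.choose h * P {ω | successes X (a + b) ω = T} := by
  have hfirst (ω : Ω) : ∑ i ∈ range a, X i ω = #{i ∈ successes X (a + b) ω | i.val < a} := by
    rw [← sum_filter_range_eq_card_filter_successes hX01 (a + b) ω (· < a)]
    congr 1
    ext i
    simp only [mem_range, mem_filter]
    omega
  have hsecond (ω : Ω) :
      ∑ i ∈ range b, X (a + i) ω = #{i ∈ successes X (a + b) ω | ¬i.val < a} := by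
    have hshift : ∑ i ∈ range b, X (a + i) ω = ∑ i ∈ Ico a (a + b), X i ω := by
      rw [sum_Ico_eq_sum_range, Nat.add_sub_cancel_left]
    rw [hshift, ← sum_filter_range_eq_card_filter_successes hX01 (a + b) ω (¬· < a)]
    congr 1
    ext i
    simp only [mem_range, mem_filter, mem_Ico]
    omega
  set 𝒮 : Finset (Finset (Fin (a + b))) :=
    {S | #{i ∈ S | i.val < a} = r ∧ #{i ∈ S | ¬i.val < a} = h} with h𝒮
  have hevent : {ω | ∑ i ∈ range a, X i ω = r} ∩ {ω | ∑ i ∈ range b, X (a + i) ω = h} =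
      {ω | successes X (a + b) ω ∈ 𝒮} := by
    ext ω
    simp [hfirst, hsecond, 𝒮]
  have hcard : #𝒮 = a.choose r * b.choose h := by
    have hlt : #{i : Fin (a + b) | i.val < a} = a := by simp [Fin.card_filter_val_lt]
    have hge : #{i : Fin (a + b) | ¬i.val < a} = b := by
      have := card_filter_add_card_filter_not (s := univ) fun i : Fin (a + b) => i.val < a
      simp only [card_univ, Fintype.card_fin, hlt] at this
      omega
    rw [h𝒮, card_filter_card_filter_eq_choose_mul_choose, hlt, hge]
  have hcard_mem : ∀ S ∈ 𝒮, #S = r + h := by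
    intro S hS
    rw [h𝒮, mem_filter] at hS
    rw [← card_filter_add_card_filter_not (s := S) fun i : Fin (a + b) => i.val < a,
      hS.2.1, hS.2.2]
  rw [hevent, hexch.measure_successes_mem_of_card_eq hXmeas hcard_mem hT, hcard]
  push_cast
  ring

end Exchangeable

end

theorem deFinetti_stmt12_general {Ω : Type*} [MeasurableSpace Ω] (P : Measure Ω)
    (X : ℕ → Ω → ℕ)
    (hX01 : ∀ k ω, X k ω ≤ 1) (hXmeas : ∀ k, Measurable (X k))
    (hexch : Exchangeable P X) (r s : ℕ)
    (n : ℕ) (h : ℕ) (hh : h ≤ n) :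
    ((P[|{ω | ∑ i ∈ Finset.range (r + s), X i ω = r}])
        {ω | ∑ i ∈ Finset.range n, X (r + s + i) ω = h}).toReal =
      ((h + r).choose r : ℝ) * ((n - h + s).choose s : ℝ) / ((n + r + s).choose n : ℝ) *
        succProb P X (n + r + s) (h + r) / succProb P X (r + s) r := by
  obtain ⟨d, rfl⟩ := Nat.exists_eq_add_of_le hh
  obtain ⟨T, -, hT⟩ := exists_subset_card_eq (s := (univ : Finset (Fin (r + s + (h + d)))))
    (n := r + h) (by simp only [card_univ, Fintype.card_fin]; omega)
  have hA : MeasurableSet {ω | ∑ i ∈ range (r + s), X i ω = r} :=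
    Finset.measurable_sum _ (fun i _ => hXmeas i) (measurableSet_singleton r)
  have hAB := hexch.measure_sum_range_inter_sum_range_add_eq hXmeas hX01 (b := h + d) (h := h) hT
  have hD := hexch.measure_sum_range_eq hXmeas hX01 (k := h + r) (hT.trans (add_comm r h))
  have hchoose : ((r + s).choose r * (h + d).choose h * (r + s + (h + d)).choose (h + d) : ℝ) =
      (h + r).choose r * (d + s).choose s * (r + s + (h + d)).choose (h + r) := by
    exact_mod_cast choose_mul_choose_mul_choose_eq r s h d
  have hN : ((r + s + (h + d)).choose (h + d) : ℝ) ≠ 0 :=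
    Nat.cast_ne_zero.2 (Nat.choose_pos (by omega)).ne'
  rw [cond_apply hA, ENNReal.toReal_mul, ENNReal.toReal_inv, inv_mul_eq_div, hAB, succProb,
    succProb, show h + d + r + s = r + s + (h + d) by ring, hD, Nat.add_sub_cancel_left]
  simp only [ENNReal.toReal_mul, ENNReal.toReal_natCast]
  field_simp
  congr 1
  linear_combination (P {ω | successes X (r + s + (h + d)) ω = T}).toReal * hchoose

/-- for `r, s ≥ 0` with `P(X_0 + ⋯ + X_{r+s-1} = r) > 0`, for every `n ≥ 1` and
`h ≤ n`, the conditional probability of `h` successes in the `n` trials following the first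
`r + s` trials, given `r` successes among the first `r + s` trials, equals
`[C(h+r,r) C(n-h+s,s) / C(n+r+s,n)] ⬝ ω_{h+r}^(n+r+s) / ω_r^(r+s)`. -/
theorem deFinetti_stmt12 {Ω : Type*} [MeasurableSpace Ω] (P : Measure Ω)
    [IsProbabilityMeasure P] (X : ℕ → Ω → ℕ)
    (hX01 : ∀ k ω, X k ω ≤ 1) (hXmeas : ∀ k, Measurable (X k))
    (hexch : Exchangeable P X) (r s : ℕ)
    (hpos : 0 < succProb P X (r + s) r) (n : ℕ) (hn : 1 ≤ n) (h : ℕ) (hh : h ≤ n) :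
    ((P[|{ω | ∑ i ∈ Finset.range (r + s), X i ω = r}])
        {ω | ∑ i ∈ Finset.range n, X (r + s + i) ω = h}).toReal =
      ((h + r).choose r : ℝ) * ((n - h + s).choose s : ℝ) / ((n + r + s).choose n : ℝ) *
        succProb P X (n + r + s) (h + r) / succProb P X (r + s) r :=
  deFinetti_stmt12_general P X hX01 hXmeas hexch r s n h hh
end
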